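/- Let X_1,...,X_n be n nonnegative (possibly dependent) random variables with order statistics X_{1:n} ≤ ... ≤ X_{n:n}, and suppose at least one of Assumptions A, B, C holds. Then for any 0 < a ≤ b < ∞ and 0 ≤ d < ∞, the relation P(∑_{i=0}^{n-1} c_i X_{n-i:n} > x) ~ P(c_0 X_{n:n} > x) ~ ∑_{i=1}^{n} P(c_0 X_i > x) as x → ∞ holds uniformly for (c_0, c_1, ..., c_{n-1}) ∈ [a,b] × [−d,d]^{n-1}; i.e. the weights c_1,...,c_{n-1} may be negative. -/

import Mathlib

open MeasureTheory Filter Topology Asymptotics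

noncomputable section

/-- Tail probability `P(Y > x)` of a real random variable. -/
def tailP {Ω : Type*} [MeasurableSpace Ω] (μ : Measure Ω) (Y : Ω → ℝ) (x : ℝ) : ℝ :=
  (μ {ω | x < Y ω}).toReal

/-- The maximum `X_{n:n}` of finitely many random variables. -/
def maxRV {Ω : Type*} {n : ℕ} (X : Fin n → Ω → ℝ) (ω : Ω) : ℝ := ⨆ i, X i ω

/-- The `i`-th largest value (descending order statistic, `0`-indexed):
`ordDesc X i = X_{n-i:n}`. -/
def ordDesc {Ω : Type*} {n : ℕ} (X : Fin n → Ω → ℝ) (i : Fin n) (ω : Ω) : ℝ :=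
  (((List.ofFn fun j => X j ω).mergeSort fun a b => decide (b ≤ a)).getD i 0)

/-- A tail function `T = 1 - F` is long-tailed (`F ∈ 𝓛`). -/
def LongTailedT (T : ℝ → ℝ) : Prop :=
  (∀ x : ℝ, 0 ≤ x → 0 < T x) ∧
  ∀ y : ℝ, Tendsto (fun x => T (x + y) / T x) atTop (𝓝 1)

/-- A function is dominatedly varying. -/
def DomVarFun (h : ℝ → ℝ) : Prop :=
  ∀ y : ℝ, 0 < y →
    (0 : EReal) < atTop.liminf (fun x => ((h (x * y) / h x : ℝ) : EReal)) ∧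
    atTop.limsup (fun x => ((h (x * y) / h x : ℝ) : EReal)) < ⊤

/-- A function is weakly self-neglecting. -/
def WeaklySelfNeg (h : ℝ → ℝ) : Prop :=
  ∀ y : ℝ, atTop.limsup (fun x => ((h (x + y * h x) / h x : ℝ) : EReal)) < ⊤

/-- `h ∈ 𝓗_F` where `T = 1 - F` is the tail of `F`. -/
def MemScaleClass (T h : ℝ → ℝ) : Prop :=
  (∀ᶠ x in atTop, 0 < h x) ∧
  (h =o[atTop] fun x : ℝ => x) ∧
  (∀ y : ℝ, Tendsto (fun x => T (x + y * h x) / T x) atTop (𝓝 1)) ∧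
  WeaklySelfNeg h

/-- Upper endpoint `x_F = sup {x : F(x) < 1}` of a distribution with tail `T = 1 - F`. -/
def upEnd (T : ℝ → ℝ) : EReal := sSup ((fun x : ℝ => (x : EReal)) '' {x | 0 < T x})

open Classical in
/-- The filter of "`x → x_F`". -/
def endFilter (T : ℝ → ℝ) : Filter ℝ :=
  if upEnd T = ⊤ then atTop else 𝓝[<] (upEnd T).toReal

/-- `F ∈ GMDA(h)` for `T = 1 - F`. -/
def MemGMDA (T h : ℝ → ℝ) : Prop :=
  (∀ x, 0 < h x) ∧
  ∀ y : ℝ, Tendsto (fun x => T (x + y * h x) / T x) (endFilter T) (𝓝 (Real.exp (-y)))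

/-- Condition (DS1) (for all `t > 0`). -/
def DS1 {Ω : Type*} [MeasurableSpace Ω] (μ : Measure Ω) {n : ℕ} (X : Fin n → Ω → ℝ)
    (h : ℝ → ℝ) : Prop :=
  ∀ t : ℝ, 0 < t → ∀ i j : Fin n, i ≠ j →
    Tendsto (fun x => (μ {ω | t * h x < |X i ω| ∧ x < X j ω}).toReal / tailP μ (maxRV X) x)
      atTop (𝓝 0)

/-- Condition (DS2) for a given `L > 0`. -/
def DS2 {Ω : Type*} [MeasurableSpace Ω] (μ : Measure Ω) {n : ℕ} (X : Fin n → Ω → ℝ)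
    (h : ℝ → ℝ) (L : ℝ) : Prop :=
  ∀ i j : Fin n, i < j →
    Tendsto (fun x => (μ {ω | L * h x < X i ω ∧ L * h x < X j ω}).toReal / tailP μ (maxRV X) x)
      atTop (𝓝 0)

/-- Condition (v1). -/
def CondV1 {Ω : Type*} [MeasurableSpace Ω] (μ : Measure Ω) {n : ℕ} (X : Fin n → Ω → ℝ) : Prop :=
  ∀ i j : Fin n, i < j →
    Tendsto (fun x => (μ {ω | x < X i ω ∧ x < X j ω}).toReal / tailP μ (maxRV X) x)
      atTop (𝓝 0)

/-- Assumption A: `X_{n:n}` has an infinite upper endpoint, `X_{n:n} ∈ GMDA(h)`,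
(DS1) holds for all `t > 0` and (DS2) for some `L > 0`. -/
def AssumptionA {Ω : Type*} [MeasurableSpace Ω] (μ : Measure Ω) {n : ℕ}
    (X : Fin n → Ω → ℝ) : Prop :=
  ∃ h : ℝ → ℝ,
    (∀ x : ℝ, 0 < tailP μ (maxRV X) x) ∧
    MemGMDA (tailP μ (maxRV X)) h ∧
    DS1 μ X h ∧ ∃ L : ℝ, 0 < L ∧ DS2 μ X h L

/-- Assumption B: `X_{n:n} ∈ 𝓛` and some `h ∈ 𝓗_{X_{n:n}}` satisfies (DS1) for all `t > 0`
and (DS2) for some `L > 0`. -/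
def AssumptionB {Ω : Type*} [MeasurableSpace Ω] (μ : Measure Ω) {n : ℕ}
    (X : Fin n → Ω → ℝ) : Prop :=
  LongTailedT (tailP μ (maxRV X)) ∧
  ∃ h : ℝ → ℝ, MemScaleClass (tailP μ (maxRV X)) h ∧
    DS1 μ X h ∧ ∃ L : ℝ, 0 < L ∧ DS2 μ X h L

/-- Assumption C: `X_{n:n} ∈ 𝓛 ∩ 𝓓` and some dominatedly varying `h ∈ 𝓗_{X_{n:n}}`
satisfies (DS1) for all `t > 0`. -/
def AssumptionC {Ω : Type*} [MeasurableSpace Ω] (μ : Measure Ω) {n : ℕ}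
    (X : Fin n → Ω → ℝ) : Prop :=
  LongTailedT (tailP μ (maxRV X)) ∧ DomVarFun (tailP μ (maxRV X)) ∧
  ∃ h : ℝ → ℝ, DomVarFun h ∧ MemScaleClass (tailP μ (maxRV X)) h ∧ DS1 μ X h

/-- The uniform (in the weights `c ∈ K`) max-sum asymptotic equivalence (max-sum0):
`P(∑ c_i X_{n-i:n} > x) ~ P(c_0 X_{n:n} > x) ~ ∑ P(c_0 X_i > x)` uniformly on `K`. -/
def UnifMaxSum {Ω : Type*} [MeasurableSpace Ω] (μ : Measure Ω) {n : ℕ} [NeZero n]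
    (X : Fin n → Ω → ℝ) (K : Set (Fin n → ℝ)) : Prop :=
  TendstoUniformlyOn
    (fun x (c : Fin n → ℝ) =>
      tailP μ (fun ω => ∑ i, c i * ordDesc X i ω) x /
        tailP μ (fun ω => c 0 * maxRV X ω) x) 1 atTop K ∧
  TendstoUniformlyOn
    (fun x (c : Fin n → ℝ) =>
      tailP μ (fun ω => c 0 * maxRV X ω) x /
        ∑ i, tailP μ (fun ω => c 0 * X i ω) x) 1 atTop K

end

/-!
Write `T u = P(X_{n:n} > u)` and `S_c = ∑ c_i X_{n-i:n}`. If at most one `X_i` exceeds a level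
`s ≥ 0`, then `X_{n-i:n} ≤ s` for `i ≥ 1`, so `|S_c - c_0 X_{n:n}| ≤ n d s`. Hence, up to the
probability that two of the `X_i` are large, `P(S_c > c_0 u)` lies between `T (u + C s)` and
`T (u - C s)` with `C = n d / a`, uniformly in `c`. Under each assumption there are levels
(multiples of `h`, or of `u` under Assumption C) for which these pair events are `o(T u)` by
(DS1)/(DS2), while the shift by `C s` changes `T` by a factor close to `1`; under GMDA one takes
`s = ε' h` with `ε'` small, using that `h x = o(x)` and `h (x + y h x) = O(h x)`. The same pair
events give `∑ P(X_i > u) ~ T u`. Finally `x = c_0 u` with `c_0` in the compact `[a, b]`.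
-/

lemma List.exists_ne_of_two_le_countP_ofFn {α : Type*} {n : ℕ} (y : Fin n → α) (p : α → Prop)
    [DecidablePred p] (h : 2 ≤ (List.ofFn y).countP (p ·)) : ∃ i j, i ≠ j ∧ p (y i) ∧ p (y j) := by
  rw [← Multiset.coe_countP, ← Fin.univ_val_map, Multiset.countP_map] at h
  obtain ⟨i, hi, j, hj, hij⟩ := (Finset.one_lt_card (s := Finset.univ.filter (p ∘ y))).mp h
  exact ⟨i, j, hij, (Finset.mem_filter.mp hi).2, (Finset.mem_filter.mp hj).2⟩

section OrderStatistics

variable {Ω : Type*} {n : ℕ} (X : Fin n → Ω → ℝ)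

def pairEvent (s v : ℝ) : Set Ω := {ω | ∃ i j, i ≠ j ∧ s < X i ω ∧ v < X j ω}

variable {X}

lemma pairEvent_anti {s s' v v' : ℝ} (hs : s ≤ s') (hv : v ≤ v') :
    pairEvent X s' v' ⊆ pairEvent X s v := fun _ ⟨i, j, hij, hi, hj⟩ =>
  ⟨i, j, hij, hs.trans_lt hi, hv.trans_lt hj⟩

lemma lt_maxRV_iff [NeZero n] {u : ℝ} {ω : Ω} : u < maxRV X ω ↔ ∃ i, u < X i ω := by
  simp only [maxRV, ← Finset.sup'_univ_eq_ciSup, Finset.lt_sup'_iff, Finset.mem_univ, true_and]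

lemma mem_pairEvent_of_lt_maxRV [NeZero n] {s v : ℝ} {ω : Ω} (hω : ω ∈ pairEvent X s s)
    (hv : v < maxRV X ω) : ω ∈ pairEvent X s v := by
  obtain ⟨i, j, hij, hi, hj⟩ := hω
  obtain ⟨k, hk⟩ := lt_maxRV_iff.mp hv
  by_cases hki : k = i
  · exact ⟨j, k, hki ▸ hij.symm, hj, hk⟩
  · exact ⟨i, k, Ne.symm hki, hi, hk⟩

lemma exists_sorted_eq_cons [NeZero n] (ω : Ω) :
    ∃ t, (List.ofFn fun j => X j ω).mergeSort (· ≥ ·) = maxRV X ω :: t ∧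
      ∀ r ∈ t, r ≤ maxRV X ω := by
  set l := (List.ofFn fun j => X j ω).mergeSort (· ≥ ·)
  have hperm : l.Perm (List.ofFn fun j => X j ω) := List.mergeSort_perm _ _
  have hsorted : l.Pairwise (· ≥ ·) := List.pairwise_mergeSort' _ _
  match hl : l with
  | [] => exact absurd (congrArg List.length (hperm.symm.eq_nil)) (by simp [NeZero.ne n])
  | x :: t =>
    have hx : x = maxRV X ω := by
      obtain ⟨j, hj⟩ := List.mem_ofFn.mp (hperm.subset List.mem_cons_self)
      refine le_antisymm (hj ▸ le_ciSup (Finite.bddAbove_range fun i => X i ω) j)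
        (ciSup_le fun k => ?_)
      rcases List.mem_cons.mp (hperm.symm.subset (List.mem_ofFn.mpr ⟨k, rfl⟩)) with h | h
      · exact h.le
      · exact List.rel_of_pairwise_cons hsorted h
    subst hx
    exact ⟨t, rfl, fun r hr => List.rel_of_pairwise_cons hsorted hr⟩

lemma ordDesc_eq_getD (i : Fin n) (ω : Ω) :
    ordDesc X i ω = ((List.ofFn fun j => X j ω).mergeSort (· ≥ ·)).getD i 0 := rfl

lemma ordDesc_nonneg (hX : ∀ i ω, 0 ≤ X i ω) (i : Fin n) (ω : Ω) : 0 ≤ ordDesc X i ω := by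
  have hi : (i : ℕ) < ((List.ofFn fun j => X j ω).mergeSort (· ≥ ·)).length := by simp
  rw [ordDesc_eq_getD, List.getD_eq_getElem _ _ hi]
  obtain ⟨j, hj⟩ := List.mem_ofFn.mp ((List.mergeSort_perm _ _).subset (List.getElem_mem hi))
  exact hj ▸ hX j ω

lemma ordDesc_zero [NeZero n] (ω : Ω) : ordDesc X 0 ω = maxRV X ω := by
  obtain ⟨t, ht, -⟩ := exists_sorted_eq_cons (X := X) ω
  simp [ordDesc, ht]

lemma mem_pairEvent_of_lt_ordDesc [NeZero n] {i : Fin n} (hi : i ≠ 0) {s : ℝ} {ω : Ω}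
    (hs : s < ordDesc X i ω) : ω ∈ pairEvent X s s := by
  obtain ⟨t, ht, hle⟩ := exists_sorted_eq_cons (X := X) ω
  obtain ⟨k, hk⟩ : ∃ k, (i : ℕ) = k + 1 :=
    Nat.exists_eq_add_one.mpr (Nat.pos_of_ne_zero (Fin.val_ne_zero_iff.mpr hi))
  have hkt : k < t.length := by
    have := congrArg List.length ht
    simp only [List.length_mergeSort, List.length_ofFn, List.length_cons] at this
    omega
  have hmem : ordDesc X i ω ∈ t := by
    rw [ordDesc_eq_getD, ht, hk, List.getD_cons_succ, List.getD_eq_getElem _ _ hkt]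
    exact List.getElem_mem hkt
  have hcount : 2 ≤ ((List.ofFn fun j => X j ω).countP (s < ·)) := by
    rw [← (List.mergeSort_perm _ (· ≥ ·)).countP_eq, ht, List.countP_cons]
    have : 0 < t.countP (s < ·) := List.countP_pos_iff.mpr ⟨_, hmem, by simpa using hs⟩
    rw [if_pos (decide_eq_true (hs.trans_le (hle _ hmem)))]
    omega
  exact List.exists_ne_of_two_le_countP_ofFn _ _ hcount

lemma abs_weightedSum_sub_le [NeZero n] (hX : ∀ i ω, 0 ≤ X i ω) {c : Fin n → ℝ} {d : ℝ}
    (hc : ∀ i ≠ 0, |c i| ≤ d) (hd : 0 ≤ d) {s : ℝ} (hs : 0 ≤ s) {ω : Ω}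
    (hω : ω ∉ pairEvent X s s) :
    |∑ i, c i * ordDesc X i ω - c 0 * maxRV X ω| ≤ n * d * s := by
  rw [← Finset.add_sum_erase _ _ (Finset.mem_univ 0), ordDesc_zero, add_sub_cancel_left]
  calc |∑ i ∈ Finset.univ.erase 0, c i * ordDesc X i ω|
      ≤ ∑ i ∈ Finset.univ.erase 0, d * s := by
        refine (Finset.abs_sum_le_sum_abs _ _).trans (Finset.sum_le_sum fun i hi => ?_)
        have hi0 := Finset.ne_of_mem_erase hi
        rw [abs_mul, abs_of_nonneg (ordDesc_nonneg hX i ω)]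
        exact mul_le_mul (hc i hi0) (not_lt.mp fun h => hω (mem_pairEvent_of_lt_ordDesc hi0 h))
          (ordDesc_nonneg hX i ω) hd
    _ ≤ ∑ _i : Fin n, d * s :=
        Finset.sum_le_sum_of_subset_of_nonneg (Finset.erase_subset _ _)
          fun _ _ _ => mul_nonneg hd hs
    _ = n * d * s := by simp [mul_assoc]

end OrderStatistics

section WeightBounds

variable {a c₀ D s u M : ℝ} (ha : 0 < a) (hc₀ : a ≤ c₀) (hDs : 0 ≤ D * s)
include ha hc₀ hDs

lemma le_mul_div_mul : D * s ≤ c₀ * (D / a * s) := by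
  rw [show c₀ * (D / a * s) = c₀ / a * (D * s) by ring]
  exact le_mul_of_one_le_left hDs ((one_le_div ha).mpr hc₀)

lemma sub_div_mul_lt_of_mul_lt (h : c₀ * u < c₀ * M + D * s) : u - D / a * s < M := by
  nlinarith [le_mul_div_mul ha hc₀ hDs, ha.trans_le hc₀]

lemma mul_lt_sub_of_add_div_mul_lt (h : u + D / a * s < M) : c₀ * u < c₀ * M - D * s := by
  nlinarith [le_mul_div_mul ha hc₀ hDs, ha.trans_le hc₀]

end WeightBounds

section Tails

variable {Ω : Type*} [MeasurableSpace Ω] {μ : Measure Ω}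

lemma measurable_maxRV {n : ℕ} {X : Fin n → Ω → ℝ} (hXm : ∀ i, Measurable (X i)) :
    Measurable (maxRV X) :=
  Measurable.iSup hXm

lemma tailP_const_mul (Y : Ω → ℝ) {c : ℝ} (hc : 0 < c) (x : ℝ) :
    tailP μ (fun ω => c * Y ω) x = tailP μ Y (x / c) := by
  simp only [tailP, div_lt_iff₀' hc]

variable (μ) in
def TailNegligible (Y : Ω → ℝ) (B : ℝ → Set Ω) : Prop :=
  Tendsto (fun u => μ.real (B u) / tailP μ Y u) atTop (𝓝 0)

variable {Y : Ω → ℝ} {A B : ℝ → Set Ω}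

lemma TailNegligible.comp {w : ℝ → ℝ} {K : ℝ} (hB : TailNegligible μ Y B)
    (hw : Tendsto w atTop atTop) (hpos : ∀ᶠ x in atTop, 0 < tailP μ Y x)
    (hle : ∀ᶠ u in atTop, tailP μ Y (w u) ≤ K * tailP μ Y u) :
    TailNegligible μ Y fun u => B (w u) := by
  refine squeeze_zero' (.of_forall fun u => by unfold tailP; positivity) ?_
    (by simpa using (Tendsto.comp hB hw).mul_const K)
  filter_upwards [hle, hpos, hw.eventually hpos] with u hle hu hwu
  rw [div_le_iff₀ hu, mul_assoc, div_mul_eq_mul_div, le_div_iff₀ hwu]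
  exact mul_le_mul_of_nonneg_left hle measureReal_nonneg

variable [IsFiniteMeasure μ]

lemma tailP_antitone (Y : Ω → ℝ) : Antitone (tailP μ Y) :=
  fun _ _ hxy => measureReal_mono fun _ hω => hxy.trans_lt hω

lemma tendsto_tailP_atTop {Y : Ω → ℝ} (hY : Measurable Y) :
    Tendsto (tailP μ Y) atTop (𝓝 0) := by
  have h := tendsto_measure_iInter_atTop (μ := μ) (s := fun x : ℝ => {ω | x < Y ω})
    (fun x => (measurableSet_lt measurable_const hY).nullMeasurableSet)
    (fun x y hxy ω hω => hxy.trans_lt hω) ⟨0, measure_ne_top _ _⟩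
  rw [Set.iInter_eq_empty_iff.mpr fun ω => ⟨Y ω, lt_irrefl (Y ω)⟩, measure_empty] at h
  exact (ENNReal.tendsto_toReal ENNReal.zero_ne_top).comp h

lemma TailNegligible.mono (hB : TailNegligible μ Y B) (hAB : ∀ᶠ u in atTop, A u ⊆ B u) :
    TailNegligible μ Y A := by
  refine squeeze_zero' (.of_forall fun u => by unfold tailP; positivity) ?_ hB
  filter_upwards [hAB] with u hu
  exact div_le_div_of_nonneg_right (measureReal_mono hu) ENNReal.toReal_nonneg

variable {n : ℕ} {X : Fin n → Ω → ℝ}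

lemma tailNegligible_pairEvent {s v : ℝ → ℝ}
    (h : ∀ i j, i ≠ j → TailNegligible μ Y fun u => {ω | s u < X i ω ∧ v u < X j ω}) :
    TailNegligible μ Y fun u => pairEvent X (s u) (v u) := by
  have hsum := tendsto_finsetSum (Finset.univ.offDiag : Finset (Fin n × Fin n))
    fun p hp => h p.1 p.2 (Finset.mem_offDiag.mp hp).2.2
  refine squeeze_zero (fun u => by unfold tailP; positivity) (fun u => ?_) (by simpa using hsum)
  rw [← Finset.sum_div]
  refine div_le_div_of_nonneg_right ((measureReal_mono ?_ (measure_ne_top _ _)).trans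
    (measureReal_biUnion_finset_le _ _)) ENNReal.toReal_nonneg
  rintro ω ⟨i, j, hij, hi, hj⟩
  exact Set.mem_biUnion (x := (i, j)) (by simpa using hij) ⟨hi, hj⟩

lemma tailNegligible_pairEvent_of_lt {s : ℝ → ℝ}
    (h : ∀ i j, i < j → TailNegligible μ Y fun u => {ω | s u < X i ω ∧ s u < X j ω}) :
    TailNegligible μ Y fun u => pairEvent X (s u) (s u) := by
  refine tailNegligible_pairEvent fun i j hij => ?_
  rcases hij.lt_or_gt with hij | hji
  · exact h i j hij
  · simpa only [and_comm] using h j i hji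

end Tails

section SumOfTails

variable {Ω : Type*} [MeasurableSpace Ω] {μ : Measure Ω} {n : ℕ} {X : Fin n → Ω → ℝ}

lemma measurableSet_pairEvent (hXm : ∀ i, Measurable (X i)) (s v : ℝ) :
    MeasurableSet (pairEvent X s v) := by
  simp only [pairEvent, Set.ofPred_exists, Set.ofPred_and]
  exact .iUnion fun i => .iUnion fun j => (MeasurableSet.const _).inter
    ((measurableSet_lt measurable_const (hXm i)).inter (measurableSet_lt measurable_const (hXm j)))

variable [IsFiniteMeasure μ] [NeZero n]

lemma tailP_maxRV_le_sum (u : ℝ) : tailP μ (maxRV X) u ≤ ∑ i, tailP μ (X i) u := by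
  refine (measureReal_mono fun ω hω => ?_).trans (measureReal_iUnion_fintype_le _)
  exact Set.mem_iUnion.mpr (lt_maxRV_iff.mp hω)

/-- Off the event that two coordinates exceed `u`, the events `{u < X i}` are disjoint. -/
lemma sum_tailP_le (hXm : ∀ i, Measurable (X i)) (u : ℝ) :
    ∑ i, tailP μ (X i) u ≤ tailP μ (maxRV X) u + n * μ.real (pairEvent X u u) := by
  set E : Fin n → Set Ω := fun i => {ω | u < X i ω} \ pairEvent X u u
  have hdisj : Pairwise (Function.onFun Disjoint E) := fun i j hij =>
    Set.disjoint_left.mpr fun ω hi hj => hi.2 ⟨i, j, hij, hi.1, hj.1⟩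
  have hE : ∀ i, MeasurableSet (E i) := fun i =>
    (measurableSet_lt measurable_const (hXm i)).diff (measurableSet_pairEvent hXm u u)
  calc ∑ i, tailP μ (X i) u ≤ ∑ i, (μ.real (E i) + μ.real (pairEvent X u u)) :=
        Finset.sum_le_sum fun i _ => (measureReal_mono fun ω hω => by
          by_cases h : ω ∈ pairEvent X u u
          exacts [Or.inr h, Or.inl ⟨hω, h⟩]).trans (measureReal_union_le (E i) _)
    _ = μ.real (⋃ i, E i) + n * μ.real (pairEvent X u u) := by
        rw [Finset.sum_add_distrib, measureReal_iUnion_fintype hdisj hE]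
        simp
    _ ≤ tailP μ (maxRV X) u + n * μ.real (pairEvent X u u) := by
        gcongr
        exact measureReal_mono (Set.iUnion_subset fun i ω hω => lt_maxRV_iff.mpr ⟨i, hω.1⟩)

lemma tendsto_tailP_maxRV_div_sum (hXm : ∀ i, Measurable (X i))
    (hpos : ∀ᶠ u in atTop, 0 < tailP μ (maxRV X) u)
    (hP : TailNegligible μ (maxRV X) fun u => pairEvent X u u) :
    Tendsto (fun u => tailP μ (maxRV X) u / ∑ i, tailP μ (X i) u) atTop (𝓝 1) := by
  have hratio : Tendsto (fun u => (∑ i, tailP μ (X i) u) / tailP μ (maxRV X) u) atTop (𝓝 1) := by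
    refine tendsto_of_tendsto_of_tendsto_of_le_of_le' tendsto_const_nhds
      (by simpa using (hP.const_mul (n : ℝ)).const_add 1) ?_ ?_
    · filter_upwards [hpos] with u hu
      exact (one_le_div hu).mpr (tailP_maxRV_le_sum u)
    · filter_upwards [hpos] with u hu
      rw [div_le_iff₀ hu, add_mul, one_mul, mul_div_assoc', div_mul_cancel₀ _ hu.ne']
      exact sum_tailP_le hXm u
  simpa using hratio.inv₀ one_ne_zero

end SumOfTails

section Sandwich

variable {Ω : Type*} [MeasurableSpace Ω] {μ : Measure Ω} {n : ℕ} {X : Fin n → Ω → ℝ}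

variable (μ X) in
/-- Levels for the sandwich
`T (u + C s₁) - P(A₁) ≤ P(∑ c_i X_{n-i:n} > c₀ u) ≤ T (u - C s₁) + P(A₁) + P(A₂)`
with `A₁ = pairEvent X s₁ v` and `A₂ = pairEvent X s₂ s₂`. -/
structure SandwichScales (C ε : ℝ) (s₁ s₂ v : ℝ → ℝ) : Prop where
  nonneg : ∀ᶠ u in atTop, 0 ≤ s₁ u ∧ 0 ≤ s₂ u
  le_self : ∀ᶠ u in atTop, s₂ u ≤ u
  le_sub : ∀ᶠ u in atTop, v u ≤ u - C * s₂ u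
  negligible_pair₁ : TailNegligible μ (maxRV X) fun u => pairEvent X (s₁ u) (v u)
  negligible_pair₂ : TailNegligible μ (maxRV X) fun u => pairEvent X (s₂ u) (s₂ u)
  tail_sub_le : ∀ᶠ u in atTop, tailP μ (maxRV X) (u - C * s₁ u) ≤ (1 + ε) * tailP μ (maxRV X) u
  le_tail_add : ∀ᶠ u in atTop, (1 - ε) * tailP μ (maxRV X) u ≤ tailP μ (maxRV X) (u + C * s₁ u)

variable [IsFiniteMeasure μ] [NeZero n] (hX : ∀ i ω, 0 ≤ X i ω) {a d : ℝ} (ha : 0 < a)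
  (hd : 0 ≤ d) {c : Fin n → ℝ} (hc₀ : a ≤ c 0) (hc : ∀ i ≠ 0, |c i| ≤ d)
include hX ha hd hc₀ hc

lemma tailP_weightedSum_le {u s₁ s₂ v : ℝ} (hs₁ : 0 ≤ s₁) (hs₂ : 0 ≤ s₂)
    (hv : v ≤ u - n * d / a * s₂) :
    tailP μ (fun ω => ∑ i, c i * ordDesc X i ω) (c 0 * u) ≤
      tailP μ (maxRV X) (u - n * d / a * s₁) + μ.real (pairEvent X s₁ v) +
        μ.real (pairEvent X s₂ s₂) := by
  have hmax {s : ℝ} (hs : 0 ≤ s) {ω : Ω} (hω : c 0 * u < ∑ i, c i * ordDesc X i ω)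
      (hpair : ω ∉ pairEvent X s s) : u - n * d / a * s < maxRV X ω := by
    have := (abs_le.mp (abs_weightedSum_sub_le hX hc hd hs hpair)).2
    exact sub_div_mul_lt_of_mul_lt ha hc₀ (by positivity) (by linarith)
  refine (measureReal_mono (s₂ := {ω | u - n * d / a * s₁ < maxRV X ω} ∪ pairEvent X s₁ v ∪
    pairEvent X s₂ s₂) (fun ω hω => ?_)).trans
      ((measureReal_union_le _ _).trans (add_le_add_left (measureReal_union_le _ _) _))
  by_cases h₂ : ω ∈ pairEvent X s₂ s₂
  · exact Or.inr h₂
  by_cases h₁ : ω ∈ pairEvent X s₁ s₁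
  · exact Or.inl (Or.inr (mem_pairEvent_of_lt_maxRV h₁ (hv.trans_lt (hmax hs₂ hω h₂))))
  · exact Or.inl (Or.inl (hmax hs₁ hω h₁))

lemma le_tailP_weightedSum {u s v : ℝ} (hs : 0 ≤ s) (hv : v ≤ u) :
    tailP μ (maxRV X) (u + n * d / a * s) ≤
      tailP μ (fun ω => ∑ i, c i * ordDesc X i ω) (c 0 * u) + μ.real (pairEvent X s v) := by
  refine (measureReal_mono (s₂ := {ω | c 0 * u < ∑ i, c i * ordDesc X i ω} ∪ pairEvent X s v)
    (fun ω hω => ?_)).trans (measureReal_union_le _ _)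
  have hvω : v < maxRV X ω := by
    have : 0 ≤ n * d / a * s := by positivity
    exact hv.trans_lt (by linarith [show u + n * d / a * s < maxRV X ω from hω])
  by_cases h : ω ∈ pairEvent X s s
  · exact Or.inr (mem_pairEvent_of_lt_maxRV h hvω)
  · have := (abs_le.mp (abs_weightedSum_sub_le hX hc hd hs h)).1
    exact Or.inl (show c 0 * u < _ by
      linarith [mul_lt_sub_of_add_div_mul_lt ha hc₀ (by positivity) hω])

end Sandwich

section Uniform

variable {Ω : Type*} [MeasurableSpace Ω] {μ : Measure Ω} [IsFiniteMeasure μ] {n : ℕ} [NeZero n]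
  {X : Fin n → Ω → ℝ}

theorem tendstoUniformlyOn_tailP_weightedSum_div (hX : ∀ i ω, 0 ≤ X i ω) {a d : ℝ} (ha : 0 < a)
    (hd : 0 ≤ d) (hpos : ∀ᶠ u in atTop, 0 < tailP μ (maxRV X) u)
    (hscales : ∀ ε > 0, ∃ s₁ s₂ v, SandwichScales μ X (n * d / a) ε s₁ s₂ v) :
    TendstoUniformlyOn
      (fun u (c : Fin n → ℝ) =>
        tailP μ (fun ω => ∑ i, c i * ordDesc X i ω) (c 0 * u) / tailP μ (maxRV X) u) 1 atTop
      {c | a ≤ c 0 ∧ ∀ i ≠ 0, |c i| ≤ d} := by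
  rw [Metric.tendstoUniformlyOn_iff]
  intro ε hε
  obtain ⟨s₁, s₂, v, hS⟩ := hscales (ε / 3) (by positivity)
  have hbad := (hS.negligible_pair₁.add hS.negligible_pair₂).eventually_lt_const
    (show (0 : ℝ) + 0 < ε / 3 by linarith)
  filter_upwards [hS.nonneg, hS.le_sub, hS.tail_sub_le, hS.le_tail_add, hbad, hpos]
    with u ⟨hs₁, hs₂⟩ hv hup hlow hbad hT
  rintro c ⟨hc₀, hc⟩
  rw [← add_div, div_lt_iff₀ hT] at hbad
  have h₁ := tailP_weightedSum_le (μ := μ) hX ha hd hc₀ hc hs₁ hs₂ hv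
  have h₂ := le_tailP_weightedSum (μ := μ) hX ha hd hc₀ hc hs₁
    (hv.trans (sub_le_self _ (by positivity)))
  have h₃ : 0 ≤ μ.real (pairEvent X (s₁ u) (v u)) := measureReal_nonneg
  have h₄ : 0 ≤ μ.real (pairEvent X (s₂ u) (s₂ u)) := measureReal_nonneg
  rw [Pi.one_apply, dist_comm, Real.dist_eq, div_sub_one hT.ne', abs_div, abs_of_pos hT,
    div_lt_iff₀ hT, abs_lt]
  constructor <;> linarith

end Uniform

lemma TendstoUniformlyOn.comp_div_atTop {ι β : Type*} [UniformSpace β] {F : ℝ → ι → β}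
    {f : ι → β} {K : Set ι} {g : ι → ℝ} {b : ℝ} (hF : TendstoUniformlyOn F f atTop K)
    (hb : 0 < b) (hg : ∀ c ∈ K, 0 < g c ∧ g c ≤ b) :
    TendstoUniformlyOn (fun x c => F (x / g c) c) f atTop K := by
  rw [tendstoUniformlyOn_iff_tendsto] at hF ⊢
  refine hF.comp (f := fun q : ℝ × ι => (q.1 / g q.2, q.2))
    (tendsto_prod_iff'.mpr ⟨?_, tendsto_snd⟩)
  refine tendsto_atTop_mono' _ ?_ (tendsto_fst.atTop_div_const hb)
  filter_upwards [prod_mem_prod (Ici_mem_atTop 0) (mem_principal_self K)]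
    with ⟨x, c⟩ ⟨hx, hc⟩
  exact div_le_div_of_nonneg_left hx (hg c hc).1 (hg c hc).2

theorem unifMaxSum_of_sandwichScales {Ω : Type*} [MeasurableSpace Ω] {μ : Measure Ω}
    [IsFiniteMeasure μ] {n : ℕ} [NeZero n] {X : Fin n → Ω → ℝ} (hXm : ∀ i, Measurable (X i))
    (hX : ∀ i ω, 0 ≤ X i ω) {a b d : ℝ} (ha : 0 < a) (hab : a ≤ b) (hd : 0 ≤ d)
    (hpos : ∀ᶠ u in atTop, 0 < tailP μ (maxRV X) u)
    (hscales : ∀ ε > 0, ∃ s₁ s₂ v, SandwichScales μ X (n * d / a) ε s₁ s₂ v) :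
    UnifMaxSum μ X
      {c : Fin n → ℝ | c 0 ∈ Set.Icc a b ∧ ∀ i : Fin n, i ≠ 0 → c i ∈ Set.Icc (-d) d} := by
  have hK : ∀ c ∈ {c : Fin n → ℝ | c 0 ∈ Set.Icc a b ∧ ∀ i, i ≠ 0 → c i ∈ Set.Icc (-d) d},
      0 < c 0 ∧ c 0 ≤ b := fun c hc => ⟨ha.trans_le hc.1.1, hc.1.2⟩
  obtain ⟨s₁, s₂, v, hS⟩ := hscales 1 one_pos
  have hP : TailNegligible μ (maxRV X) fun u => pairEvent X u u :=
    hS.negligible_pair₂.mono (by filter_upwards [hS.le_self] with u hu using pairEvent_anti hu hu)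
  constructor
  · refine (((tendstoUniformlyOn_tailP_weightedSum_div hX ha hd hpos hscales).mono
      fun c hc => ⟨hc.1.1, fun i hi => abs_le.mpr (hc.2 i hi)⟩).comp_div_atTop
        (ha.trans_le hab) hK).congr (.of_forall fun x c hc => ?_)
    simp only [mul_div_cancel₀ x (hK c hc).1.ne', tailP_const_mul _ (hK c hc).1]
  · refine (((tendsto_tailP_maxRV_div_sum hXm hpos hP).tendstoUniformlyOn_const _).comp_div_atTop
      (ha.trans_le hab) hK).congr (.of_forall fun x c hc => ?_)
    simp only [tailP_const_mul _ (hK c hc).1]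

section RealFunctions

variable {T h : ℝ → ℝ}

lemma eventually_le_mul_of_tendsto_div {f g : ℝ → ℝ} {ℓ r : ℝ}
    (hfg : Tendsto (fun u => f u / g u) atTop (𝓝 ℓ)) (hr : ℓ < r) (hg : ∀ᶠ u in atTop, 0 < g u) :
    ∀ᶠ u in atTop, f u ≤ r * g u := by
  filter_upwards [hfg.eventually_lt_const hr, hg] with u hu hgu
  exact ((div_lt_iff₀ hgu).mp hu).le

lemma eventually_mul_le_of_tendsto_div {f g : ℝ → ℝ} {ℓ r : ℝ}
    (hfg : Tendsto (fun u => f u / g u) atTop (𝓝 ℓ)) (hr : r < ℓ) (hg : ∀ᶠ u in atTop, 0 < g u) :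
    ∀ᶠ u in atTop, r * g u ≤ f u := by
  filter_upwards [hfg.eventually_const_lt hr, hg] with u hu hgu
  exact ((lt_div_iff₀ hgu).mp hu).le

lemma eventually_tail_shift_bounds {s : ℝ → ℝ}
    (hs : ∀ y, Tendsto (fun x => T (x + y * s x) / T x) atTop (𝓝 1))
    (hpos : ∀ᶠ u in atTop, 0 < T u) (C : ℝ) {ε : ℝ} (hε : 0 < ε) :
    (∀ᶠ u in atTop, T (u - C * s u) ≤ (1 + ε) * T u) ∧
      ∀ᶠ u in atTop, (1 - ε) * T u ≤ T (u + C * s u) :=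
  ⟨eventually_le_mul_of_tendsto_div (by simpa [neg_mul, ← sub_eq_add_neg] using hs (-C))
    (by linarith) hpos, eventually_mul_le_of_tendsto_div (hs C) (by linarith) hpos⟩

lemma eventually_le_mul_self_of_isLittleO (hh : h =o[atTop] fun x => x) {c : ℝ} (hc : 0 < c) :
    ∀ᶠ x in atTop, h x ≤ c * x := by
  filter_upwards [hh.def hc, eventually_ge_atTop 0] with x hx hx₀
  simpa [abs_of_nonneg hx₀] using (le_abs_self _).trans hx

lemma tendsto_add_mul_atTop (hh : ∀ c > 0, ∀ᶠ x in atTop, h x ≤ c * x)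
    (hpos : ∀ᶠ x in atTop, 0 ≤ h x) (y : ℝ) : Tendsto (fun x => x + y * h x) atTop atTop := by
  refine tendsto_atTop_mono' _ ?_ (tendsto_id.atTop_div_const two_pos)
  filter_upwards [hh (1 / (2 * (|y| + 1))) (by positivity), hpos, eventually_ge_atTop 0]
    with x hhx hh₀ hx
  have hy : |y| * (1 / (2 * (|y| + 1))) ≤ 1 / 2 := by
    rw [mul_one_div, div_le_iff₀ (by positivity)]
    linarith [abs_nonneg y]
  have : |y| * h x ≤ x / 2 := by
    calc |y| * h x ≤ |y| * (1 / (2 * (|y| + 1)) * x) := by gcongr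
      _ ≤ 1 / 2 * x := by rw [← mul_assoc]; gcongr
      _ = x / 2 := by ring
  have := mul_le_mul_of_nonneg_right (neg_abs_le y) hh₀
  simp only [id]
  linarith

lemma DomVarFun.exists_eventually_comp_mul_le (hf : DomVarFun T) (hpos : ∀ᶠ x in atTop, 0 < T x)
    {κ : ℝ} (hκ : 0 < κ) : ∃ K > 0, ∀ᶠ u in atTop, T (κ * u) ≤ K * T u := by
  obtain ⟨m, hm₀, hm⟩ := EReal.exists_between_coe_real (hf κ⁻¹ (inv_pos.mpr hκ)).1
  have hκu : Tendsto (fun u => κ * u) atTop atTop := tendsto_id.const_mul_atTop hκ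
  refine ⟨m⁻¹, inv_pos.mpr (by exact_mod_cast hm₀), ?_⟩
  filter_upwards [hκu.eventually (eventually_lt_of_lt_liminf hm), hκu.eventually hpos]
    with u hu hTu
  rw [show κ * u * κ⁻¹ = u by field_simp] at hu
  have : m < T u / T (κ * u) := by exact_mod_cast hu
  rw [lt_div_iff₀ hTu] at this
  rw [← div_eq_inv_mul, le_div_iff₀ (by exact_mod_cast hm₀)]
  linarith

end RealFunctions

section GMDA

variable {T h : ℝ → ℝ}

lemma endFilter_eq_atTop (hpos : ∀ x, 0 < T x) : endFilter T = atTop := by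
  have : upEnd T = ⊤ := by
    refine sSup_eq_top.mpr fun b hb => ?_
    obtain ⟨r, hbr, -⟩ := EReal.exists_between_coe_real hb
    exact ⟨r, ⟨r, hpos r, rfl⟩, hbr⟩
  rw [endFilter, if_pos this]

variable (hT : Antitone T) (hpos : ∀ x, 0 < T x)
  (hG : ∀ y, Tendsto (fun x => T (x + y * h x) / T x) atTop (𝓝 (Real.exp (-y))))
include hT hpos hG

/-- If `h x > c x`, the shift `x - h x / c` falls below `0`, where `T` is bounded below while
`T x → 0`; the limit `exp (1 / c)` of the shifted ratio forbids this. -/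
lemma eventually_le_mul_self_of_gmda (hlim : Tendsto T atTop (𝓝 0)) {c : ℝ} (hc : 0 < c) :
    ∀ᶠ x in atTop, h x ≤ c * x := by
  have hratio : Tendsto (fun x => T (x + -c⁻¹ * h x) / T x) atTop (𝓝 (Real.exp c⁻¹)) := by
    simpa using hG (-c⁻¹)
  have hblow : Tendsto (fun x => T 0 / T x) atTop atTop :=
    Tendsto.const_mul_atTop (hpos 0)
      (tendsto_inv_nhdsGT_zero.comp (tendsto_nhdsWithin_iff.mpr ⟨hlim, .of_forall hpos⟩))
  filter_upwards [hratio.eventually_lt_const (lt_add_one _),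
    hblow.eventually_gt_atTop (Real.exp c⁻¹ + 1)] with x h₁ h₂
  have : T (x + -c⁻¹ * h x) < T 0 := (div_lt_div_iff_of_pos_right (hpos x)).mp (h₁.trans h₂)
  have := hT.reflect_lt this
  rw [neg_mul, ← sub_eq_add_neg, sub_pos, inv_mul_lt_iff₀ hc] at this
  exact this.le

/-- With `w = x + y h x`, `T (w + h w) / T w → exp (-1)` while `T (w + 2 h x) / T w → exp (-2)`;
as `T` is antitone, eventually `h w < 2 h x`. -/
lemma eventually_lt_two_mul_of_gmda {y : ℝ} (hw : Tendsto (fun x => x + y * h x) atTop atTop) :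
    ∀ᶠ x in atTop, h (x + y * h x) < 2 * h x := by
  have hr := (hG 1).comp hw
  have hq : Tendsto (fun x => T (x + y * h x + 2 * h x) / T (x + y * h x)) atTop
      (𝓝 (Real.exp (-2))) := by
    have := (hG (y + 2)).div (hG y) (Real.exp_ne_zero _)
    rw [← Real.exp_sub, show -(y + 2) - -y = -2 by ring] at this
    refine this.congr fun x => ?_
    rw [Pi.div_apply, div_div_div_cancel_right₀ (hpos x).ne', add_assoc, ← add_mul]
  filter_upwards [hq.eventually_lt hr (Real.exp_lt_exp.mpr (by norm_num))] with x hx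
  have := hT.reflect_lt ((div_lt_div_iff_of_pos_right (hpos _)).mp hx)
  rw [one_mul] at this
  linarith

end GMDA

section Assumptions

variable {Ω : Type*} [MeasurableSpace Ω] {μ : Measure Ω} [IsFiniteMeasure μ] {n : ℕ}
  {X : Fin n → Ω → ℝ} {h : ℝ → ℝ}

lemma DS1.tailNegligible_pairEvent (hDS1 : DS1 μ X h) {t : ℝ} (ht : 0 < t) :
    TailNegligible μ (maxRV X) fun x => pairEvent X (t * h x) x :=
  _root_.tailNegligible_pairEvent fun i j hij => TailNegligible.mono (hDS1 t ht i j hij)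
    (.of_forall fun _ _ hω => ⟨hω.1.trans_le (le_abs_self _), hω.2⟩)

lemma DS2.tailNegligible_pairEvent {L : ℝ} (hDS2 : DS2 μ X h L) :
    TailNegligible μ (maxRV X) fun x => pairEvent X (L * h x) (L * h x) :=
  _root_.tailNegligible_pairEvent_of_lt hDS2

lemma AssumptionB.exists_sandwichScales (hB : AssumptionB μ X) {C : ℝ} (hC : 0 ≤ C) {ε : ℝ}
    (hε : 0 < ε) : ∃ s₁ s₂ v, SandwichScales μ X C ε s₁ s₂ v := by
  obtain ⟨⟨hTpos, -⟩, h, ⟨hhpos, hho, hins, -⟩, -, L, hL, hDS2⟩ := hB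
  have hpos : ∀ᶠ u in atTop, 0 < tailP μ (maxRV X) u := eventually_atTop.mpr ⟨0, hTpos⟩
  have hsmall : ∀ᶠ u in atTop, (C + 1) * (L * h u) ≤ u := by
    filter_upwards [eventually_le_mul_self_of_isLittleO hho (c := ((C + 1) * L)⁻¹) (by positivity)]
      with u hu
    rwa [← mul_assoc, ← le_inv_mul_iff₀ (by positivity)]
  have hshift := eventually_tail_shift_bounds (s := fun u => L * h u)
    (fun y => by simpa only [← mul_assoc] using hins (y * L)) hpos C hε
  refine ⟨fun u => L * h u, fun u => L * h u, fun u => u - C * (L * h u),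
    ⟨?_, ?_, .of_forall fun _ => le_rfl, ?_, hDS2.tailNegligible_pairEvent, hshift.1, hshift.2⟩⟩
  · filter_upwards [hhpos] with u hu
    exact ⟨by positivity, by positivity⟩
  · filter_upwards [hsmall, hhpos] with u hu hu'
    nlinarith [mul_pos hL hu']
  · refine hDS2.tailNegligible_pairEvent.mono ?_
    filter_upwards [hsmall] with u hu
    exact pairEvent_anti le_rfl (by linarith)

lemma AssumptionC.exists_sandwichScales (hAC : AssumptionC μ X) {C : ℝ} (hC : 0 ≤ C) {ε : ℝ}
    (hε : 0 < ε) : ∃ s₁ s₂ v, SandwichScales μ X C ε s₁ s₂ v := by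
  obtain ⟨⟨hTpos, -⟩, hDT, h, hDh, ⟨hhpos, hho, hins, -⟩, hDS1⟩ := hAC
  have hpos : ∀ᶠ u in atTop, 0 < tailP μ (maxRV X) u := eventually_atTop.mpr ⟨0, hTpos⟩
  set δ : ℝ := (2 * (C + 1))⁻¹
  have hδ : 0 < δ := by positivity
  have hCδ : C * δ ≤ 2⁻¹ := by
    rw [← div_eq_mul_inv, div_le_iff₀ (by positivity)]
    linarith
  have hδ1 : δ ≤ 1 := inv_le_one_of_one_le₀ (by linarith)
  have hδu : Tendsto (fun u => δ * u) atTop atTop := tendsto_id.const_mul_atTop hδ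
  have hhalf : Tendsto (fun u : ℝ => 2⁻¹ * u) atTop atTop :=
    tendsto_id.const_mul_atTop (by norm_num)
  obtain ⟨K₁, -, hK₁⟩ := hDT.exists_eventually_comp_mul_le hpos hδ
  obtain ⟨K₂, -, hK₂⟩ := hDT.exists_eventually_comp_mul_le hpos (by norm_num : (0 : ℝ) < 2⁻¹)
  obtain ⟨K₃, hK₃, hhK₃⟩ :=
    hDh.exists_eventually_comp_mul_le hhpos (by norm_num : (0 : ℝ) < 2⁻¹)
  -- The pair events are read off (DS1) at `x = u / 2` and `x = δ u`; dominated variation of `T`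
  -- and `h` carries the estimates back to level `u`.
  refine ⟨h, fun u => δ * u, fun u => 2⁻¹ * u, ⟨?_, ?_, ?_, ?_, ?_, ?_, ?_⟩⟩
  · filter_upwards [hhpos, eventually_ge_atTop 0] with u hu hu₀
    exact ⟨hu.le, by positivity⟩
  · filter_upwards [eventually_ge_atTop 0] with u hu
    nlinarith
  · filter_upwards [eventually_ge_atTop 0] with u hu
    nlinarith
  · refine ((hDS1.tailNegligible_pairEvent (inv_pos.mpr hK₃)).comp hhalf hpos hK₂).mono ?_
    filter_upwards [hhK₃] with u hu
    exact pairEvent_anti ((inv_mul_le_iff₀ hK₃).mpr hu) le_rfl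
  · refine ((hDS1.tailNegligible_pairEvent one_pos).comp hδu hpos hK₁).mono ?_
    filter_upwards [hδu.eventually (eventually_le_mul_self_of_isLittleO hho one_pos)] with u hu
    exact pairEvent_anti (by linarith) le_rfl
  · exact (eventually_tail_shift_bounds hins hpos C hε).1
  · exact (eventually_tail_shift_bounds hins hpos C hε).2

lemma AssumptionA.exists_sandwichScales (hA : AssumptionA μ X) (hXm : ∀ i, Measurable (X i))
    {C : ℝ} {ε : ℝ} (hε : 0 < ε) : ∃ s₁ s₂ v, SandwichScales μ X C ε s₁ s₂ v := by
  obtain ⟨h, hTpos, ⟨hhpos, hG⟩, hDS1, L, hL, hDS2⟩ := hA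
  rw [endFilter_eq_atTop hTpos] at hG
  have hpos : ∀ᶠ u in atTop, 0 < tailP μ (maxRV X) u := .of_forall hTpos
  have ho : ∀ c > 0, ∀ᶠ x in atTop, h x ≤ c * x := fun c hc =>
    eventually_le_mul_self_of_gmda (tailP_antitone _) hTpos hG
      (tendsto_tailP_atTop (measurable_maxRV hXm)) hc
  have hw := tendsto_add_mul_atTop ho (.of_forall fun x => (hhpos x).le) (-(C * L))
  obtain ⟨ε', hup, hlow, hε'⟩ : ∃ ε', Real.exp (C * ε') < 1 + ε ∧
      1 - ε < Real.exp (-(C * ε')) ∧ 0 < ε' := by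
    have hcont (k : ℝ) : Tendsto (fun t => Real.exp (k * t)) (𝓝[>] 0) (𝓝 1) := by
      simpa using ((by fun_prop : Continuous fun t => Real.exp (k * t)).tendsto 0).mono_left
        nhdsWithin_le_nhds
    refine (((hcont C).eventually_lt_const (show (1 : ℝ) < 1 + ε by linarith)).and
      (((hcont (-C)).eventually_const_lt (show 1 - ε < (1 : ℝ) by linarith)).and
        self_mem_nhdsWithin)).exists.imp fun t ht => ?_
    simpa [neg_mul] using ht
  refine ⟨fun u => ε' * h u, fun u => L * h u, fun u => u + -(C * L) * h u,
    ⟨.of_forall fun u => ⟨mul_nonneg hε'.le (hhpos u).le, mul_nonneg hL.le (hhpos u).le⟩, ?_,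
      .of_forall fun u => by linarith, ?_, hDS2.tailNegligible_pairEvent, ?_, ?_⟩⟩
  · filter_upwards [ho L⁻¹ (inv_pos.mpr hL)] with u hu
    rwa [← le_inv_mul_iff₀ hL]
  · refine ((hDS1.tailNegligible_pairEvent (half_pos hε')).comp hw hpos
      (eventually_le_mul_of_tendsto_div (hG _) (lt_add_one _) hpos)).mono ?_
    filter_upwards [eventually_lt_two_mul_of_gmda (tailP_antitone _) hTpos hG hw] with u hu
    refine pairEvent_anti ?_ le_rfl
    nlinarith
  · exact eventually_le_mul_of_tendsto_div
      (by simpa [neg_mul, ← sub_eq_add_neg, mul_assoc] using hG (-(C * ε'))) hup hpos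
  · exact eventually_mul_le_of_tendsto_div (by simpa [mul_assoc] using hG (C * ε')) hlow hpos

end Assumptions

/-- Corollary 3.1, nonnegative risks and possibly negative weights. -/
theorem weighted_order_stats_tail_nonneg_signed_weights
    {Ω : Type*} [MeasurableSpace Ω] (μ : Measure Ω) [IsProbabilityMeasure μ]
    {n : ℕ} [NeZero n] (X : Fin n → Ω → ℝ) (hXm : ∀ i, Measurable (X i))
    (hXpos : ∀ i ω, 0 ≤ X i ω)
    (hABC : AssumptionA μ X ∨ AssumptionB μ X ∨ AssumptionC μ X)
    (a b d : ℝ) (ha : 0 < a) (hab : a ≤ b) (hd : 0 ≤ d) :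
    UnifMaxSum μ X
      {c : Fin n → ℝ | c 0 ∈ Set.Icc a b ∧ ∀ i : Fin n, i ≠ 0 → c i ∈ Set.Icc (-d) d} := by
  have hpos : ∀ᶠ u in atTop, 0 < tailP μ (maxRV X) u := by
    rcases hABC with ⟨-, hT, -⟩ | ⟨⟨hT, -⟩, -⟩ | ⟨⟨hT, -⟩, -⟩
    exacts [.of_forall hT, eventually_atTop.mpr ⟨0, hT⟩, eventually_atTop.mpr ⟨0, hT⟩]
  refine unifMaxSum_of_sandwichScales hXm hXpos ha hab hd hpos fun ε hε => ?_
  have hC₀ : (0 : ℝ) ≤ n * d / a := by positivity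
  rcases hABC with hA | hB | hC
  · exact hA.exists_sandwichScales hXm hε
  · exact hB.exists_sandwichScales hC₀ hε
  · exact hC.exists_sandwichScales hC₀ hε
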